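/- In the first q-commutative algebra Q_1 = K(q)⟨x,y | yx = qxy⟩, for any non-constant f ∈ K(q)[x], the multiplicative set S generated by {f(q^z x) : z ∈ ℤ} satisfies the right Ore condition: for every g ∈ Q_1 and h ∈ S there exist t ∈ Q_1 and h' ∈ S with g · h' = h · t. -/

import Mathlib

/-!
Since `S` consists of multiplication operators it is commutative and lies in `Q₁`, so the set of
`g ∈ Q₁` satisfying the right Ore condition for `S` is closed under sums (use the product of the
two denominators) and products (apply the condition twice). It therefore suffices to check the
generators: `x` commutes with `S`, and `y · f(q^(z-1) x) = f(q^z x) · y` lets `y` pass through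
every generator of `S` at the cost of a shift of `z`.
-/

open Polynomial

theorem Algebra.exists_mul_eq_mul_of_mem_adjoin {R A : Type*} [CommSemiring R] [Semiring A]
    [Algebra R A] {s : Set A} {S : Submonoid A} (hS_comm : ∀ a ∈ S, ∀ b ∈ S, Commute a b)
    (hS_adjoin : ∀ a ∈ S, a ∈ adjoin R s)
    (hs : ∀ u ∈ s, ∀ h ∈ S, ∃ h' ∈ S, ∃ t ∈ adjoin R s, u * h' = h * t) :
    ∀ g ∈ adjoin R s, ∀ h ∈ S, ∃ h' ∈ S, ∃ t ∈ adjoin R s, g * h' = h * t := by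
  intro g hg
  induction hg using Algebra.adjoin_induction with
  | mem u hu => exact hs u hu
  | algebraMap r =>
    intro h hh
    exact ⟨h, hh, algebraMap R A r, Subalgebra.algebraMap_mem _ r, Algebra.commutes r h⟩
  | add g₁ g₂ _ _ ih₁ ih₂ =>
    intro h hh
    obtain ⟨h₁, hh₁, t₁, ht₁, e₁⟩ := ih₁ h hh
    obtain ⟨h₂, hh₂, t₂, ht₂, e₂⟩ := ih₂ h hh
    refine ⟨h₁ * h₂, mul_mem hh₁ hh₂, t₁ * h₂ + t₂ * h₁,
      add_mem (mul_mem ht₁ (hS_adjoin h₂ hh₂)) (mul_mem ht₂ (hS_adjoin h₁ hh₁)), ?_⟩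
    calc (g₁ + g₂) * (h₁ * h₂) = g₁ * h₁ * h₂ + g₂ * h₂ * h₁ := by
          rw [add_mul, mul_assoc, mul_assoc, (hS_comm h₂ hh₂ h₁ hh₁).eq]
      _ = h * (t₁ * h₂ + t₂ * h₁) := by rw [e₁, e₂, mul_add, mul_assoc, mul_assoc]
  | mul g₁ g₂ _ _ ih₁ ih₂ =>
    intro h hh
    obtain ⟨h₁, hh₁, t₁, ht₁, e₁⟩ := ih₁ h hh
    obtain ⟨h₂, hh₂, t₂, ht₂, e₂⟩ := ih₂ h₁ hh₁
    refine ⟨h₂, hh₂, t₁ * t₂, mul_mem ht₁ ht₂, ?_⟩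
    rw [mul_assoc, e₂, ← mul_assoc, e₁, mul_assoc]

theorem Submonoid.exists_semiconjBy_of_mem_closure {M : Type*} [Monoid M] {u : M} {s : Set M}
    (hs : ∀ h ∈ s, ∃ h' ∈ closure s, SemiconjBy u h' h) {h : M} (hh : h ∈ closure s) :
    ∃ h' ∈ closure s, SemiconjBy u h' h := by
  induction hh using Submonoid.closure_induction with
  | mem h hh => exact hs h hh
  | one => exact ⟨1, one_mem _, SemiconjBy.one_right u⟩
  | mul a b _ _ iha ihb =>
    obtain ⟨a', ha', ea⟩ := iha
    obtain ⟨b', hb', eb⟩ := ihb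
    exact ⟨a' * b', mul_mem ha' hb', ea.mul_right eb⟩

theorem Algebra.mem_range_lmul_of_mem_closure {R A ι : Type*} [CommSemiring R] [Semiring A]
    [Algebra R A] {F : ι → A} {h : Module.End R A}
    (hh : h ∈ Submonoid.closure (Set.range fun i => LinearMap.mulLeft R (F i))) :
    h ∈ (Algebra.lmul R A).range :=
  Submonoid.closure_le (S := (Algebra.lmul R A).range.toSubmonoid).2
    (Set.range_subset_iff.2 fun i => ⟨F i, rfl⟩) hh

namespace Polynomial

variable {R : Type*} [CommSemiring R]

theorem comp_C_mul_X_comp_C_mul_X (p : R[X]) (a b : R) :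
    (p.comp (C a * X)).comp (C b * X) = p.comp (C (a * b) * X) := by
  rw [comp_assoc, mul_comp, C_comp, X_comp, ← mul_assoc, ← C_mul]

theorem mulLeft_eq_aeval_mulLeft_X (p : R[X]) :
    LinearMap.mulLeft R p = aeval (LinearMap.mulLeft R (X : R[X])) p := by
  rw [show LinearMap.mulLeft R (X : R[X]) = Algebra.lmul R R[X] X from rfl,
    aeval_algHom_apply, aeval_X_left_apply]
  rfl

theorem mulLeft_mem_adjoin_mulLeft_X (p : R[X]) (y : Module.End R R[X]) :
    LinearMap.mulLeft R p ∈ Algebra.adjoin R {LinearMap.mulLeft R (X : R[X]), y} := by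
  rw [mulLeft_eq_aeval_mulLeft_X p]
  exact Algebra.adjoin_mono (Set.singleton_subset_iff.2 (Set.mem_insert _ _))
    (aeval_mem_adjoin_singleton R _)

theorem aeval_toLinearMap_mul_mulLeft (r p : R[X]) :
    (aeval r : R[X] →ₐ[R] R[X]).toLinearMap * LinearMap.mulLeft R p =
      LinearMap.mulLeft R (p.comp r) * (aeval r : R[X] →ₐ[R] R[X]).toLinearMap := by
  refine LinearMap.ext fun s => ?_
  simp [comp_eq_aeval]

theorem semiconjBy_aeval_C_mul_X_mulLeft (q : Rˣ) (p : R[X]) :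
    SemiconjBy (aeval (C (q : R) * X) : R[X] →ₐ[R] R[X]).toLinearMap
      (LinearMap.mulLeft R (p.comp (C ((q⁻¹ : Rˣ) : R) * X))) (LinearMap.mulLeft R p) := by
  rw [SemiconjBy, aeval_toLinearMap_mul_mulLeft, comp_C_mul_X_comp_C_mul_X, Units.inv_mul,
    C_1, one_mul, comp_X]

theorem semiconjBy_aeval_C_mul_X_mulLeft_comp_C_zpow_mul_X (q : Rˣ) (f : R[X]) (z : ℤ) :
    SemiconjBy (aeval (C (q : R) * X) : R[X] →ₐ[R] R[X]).toLinearMap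
      (LinearMap.mulLeft R (f.comp (C ((q ^ (z - 1) : Rˣ) : R) * X)))
      (LinearMap.mulLeft R (f.comp (C ((q ^ z : Rˣ) : R) * X))) := by
  rw [zpow_sub_one, Units.val_mul, ← comp_C_mul_X_comp_C_mul_X]
  exact semiconjBy_aeval_C_mul_X_mulLeft q _

end Polynomial

theorem q_commutative_dilations_right_ore_general
    {K : Type*} [Field K] (q : Kˣ)
    (f : Polynomial K)
    (xop yop : Module.End K (Polynomial K))
    (hxop : xop = LinearMap.mulLeft K (Polynomial.X : Polynomial K))
    (hyop : yop = (Polynomial.aeval (Polynomial.C (q : K) * Polynomial.X : Polynomial K) :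
        Polynomial K →ₐ[K] Polynomial K).toLinearMap)
    (S : Submonoid (Module.End K (Polynomial K)))
    (hS : S = Submonoid.closure (Set.range fun z : ℤ =>
        LinearMap.mulLeft K (f.comp (Polynomial.C ((q ^ z : Kˣ) : K) * Polynomial.X)))) :
    ∀ g ∈ Algebra.adjoin K {xop, yop}, ∀ h ∈ S,
      ∃ h' ∈ S, ∃ t ∈ Algebra.adjoin K {xop, yop}, g * h' = h * t := by
  subst hxop hyop hS
  apply Algebra.exists_mul_eq_mul_of_mem_adjoin
  · intro a ha b hb
    obtain ⟨p, rfl⟩ := Algebra.mem_range_lmul_of_mem_closure ha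
    obtain ⟨r, rfl⟩ := Algebra.mem_range_lmul_of_mem_closure hb
    exact (Commute.all p r).map (Algebra.lmul K K[X])
  · intro a ha
    obtain ⟨p, rfl⟩ := Algebra.mem_range_lmul_of_mem_closure ha
    exact mulLeft_mem_adjoin_mulLeft_X p _
  · rintro u (rfl | rfl) h hh
    · obtain ⟨p, rfl⟩ := Algebra.mem_range_lmul_of_mem_closure hh
      exact ⟨_, hh, _, Algebra.subset_adjoin (Set.mem_insert _ _),
        ((Commute.all X p).map (Algebra.lmul K K[X])).eq⟩
    · refine (Submonoid.exists_semiconjBy_of_mem_closure ?_ hh).imp fun h' ⟨hh', e⟩ =>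
        ⟨hh', _, Algebra.subset_adjoin (Set.mem_insert_of_mem _ rfl), e⟩
      rintro _ ⟨z, rfl⟩
      exact ⟨_, Submonoid.subset_closure ⟨z - 1, rfl⟩,
        semiconjBy_aeval_C_mul_X_mulLeft_comp_C_zpow_mul_X q f z⟩

/-- In the first q-commutative algebra `Q₁ = K(q)⟨x,y | yx = qxy⟩` (realized as the
subalgebra of `End_K(K[x])` generated by multiplication by `X` and the q-dilation operator
`p(X) ↦ p(qX)`, for a unit `q`), for any non-constant `f ∈ K[x]`, the multiplicative monoid `S`
generated by `{f(q^z x) : z ∈ ℤ}` satisfies the right Ore condition: for every `g ∈ Q₁` and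
`h ∈ S` there exist `t ∈ Q₁` and `h' ∈ S` with `g · h' = h · t`. -/
theorem q_commutative_dilations_right_ore
    {K : Type*} [Field K] (q : Kˣ)
    (f : Polynomial K) (hf : f.natDegree ≠ 0)
    (xop yop : Module.End K (Polynomial K))
    (hxop : xop = LinearMap.mulLeft K (Polynomial.X : Polynomial K))
    (hyop : yop = (Polynomial.aeval (Polynomial.C (q : K) * Polynomial.X : Polynomial K) :
        Polynomial K →ₐ[K] Polynomial K).toLinearMap)
    (S : Submonoid (Module.End K (Polynomial K)))
    (hS : S = Submonoid.closure (Set.range fun z : ℤ =>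
        LinearMap.mulLeft K (f.comp (Polynomial.C ((q ^ z : Kˣ) : K) * Polynomial.X)))) :
    ∀ g ∈ Algebra.adjoin K {xop, yop}, ∀ h ∈ S,
      ∃ h' ∈ S, ∃ t ∈ Algebra.adjoin K {xop, yop}, g * h' = h * t :=
  q_commutative_dilations_right_ore_general q f xop yop hxop hyop S hS
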